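/- (Stabilizer Brule's Rules) With Q, S, φ, ψ, ω, λ as in the stabilizer setting, a subset J ⊆ S is a syndrome (i.e., J ∈ im ψ) if and only if ω(C, J) = 0 for every constraint C ∈ ker φ. -/

import Mathlib

open scoped symmDiff

variable {Q : Type*} [DecidableEq Q]

instance powerSetAdd : Add (Finset Q) := ⟨fun A B => A ∆ B⟩

instance powerSetZero : Zero (Finset Q) := ⟨∅⟩

instance powerSetNeg : Neg (Finset Q) := ⟨fun A => A⟩

instance powerSetAddCommGroup : AddCommGroup (Finset Q) where
  add_assoc := symmDiff_assoc
  zero_add := bot_symmDiff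
  add_zero := symmDiff_bot
  neg_add_cancel := symmDiff_self
  add_comm := symmDiff_comm
  nsmul := nsmulRec
  zsmul := zsmulRec

instance powerSetModule : Module (ZMod 2) (Finset Q) :=
  AddCommGroup.zmodModule (by
    intro x
    rw [two_nsmul]
    exact symmDiff_self x)

/-- The form `ω(A,B) = |A ∩ B| mod 2`. -/
def omegaForm (A B : Finset Q) : ZMod 2 := ((A ∩ B).card : ZMod 2)

/-- The symplectic form on the Pauli space `℘(Q)²`. -/
def lamForm (F G : Finset Q × Finset Q) : ZMod 2 :=
  ((F.1 ∩ G.2).card : ZMod 2) + ((G.1 ∩ F.2).card : ZMod 2)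

variable {ι : Type*} [Fintype ι] [DecidableEq ι]

/-- `φ : ℘(S) → ℘(Q)²`, `A ↦ Σ_{s ∈ A} s` (product of the stabilizers in `A`). -/
def phiMap (s : ι → Finset Q × Finset Q) (A : Finset ι) : Finset Q × Finset Q :=
  ∑ i ∈ A, s i

/-- The syndrome map `ψ : ℘(Q)² → ℘(S)`, `f ↦ {s ∈ S : λ(s,f) = 1}`. -/
def psiMap (s : ι → Finset Q × Finset Q) (f : Finset Q × Finset Q) : Finset ι :=
  Finset.univ.filter fun i => lamForm (s i) f = 1

/-! The identity `ω(C, ψ f) = λ(φ C, f)` makes `ψ` the adjoint of `φ`, so by nondegeneracy of `λ`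
the `ω`-orthogonal of `im ψ` is `ker φ`. As `ω` is a nondegenerate symmetric form on the
finite-dimensional `𝔽₂`-space `℘(S)`, taking orthogonals once more gives `im ψ = (ker φ)^⊥`. -/

theorem Finset.natCast_card_symmDiff {α R : Type*} [DecidableEq α] [NonAssocSemiring R] [CharP R 2]
    (X Y : Finset α) : ((X ∆ Y).card : R) = X.card + Y.card := by
  have hcard : (X ∆ Y).card + 2 * (X ∩ Y).card = X.card + Y.card := by
    rw [symmDiff_eq_sup_sdiff_inf, Finset.sup_eq_union, Finset.inf_eq_inter,
      Finset.card_sdiff_of_subset Finset.inter_subset_union, ← Finset.card_union_add_card_inter]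
    have := Finset.card_le_card (Finset.inter_subset_union (s := X) (t := Y))
    omega
  rw [← Nat.cast_add, ← hcard, Nat.cast_add, Nat.cast_mul, Nat.cast_ofNat, CharTwo.two_eq_zero,
    zero_mul, add_zero]

theorem ZMod.ite_eq_one (x : ZMod 2) : (if x = 1 then 1 else 0 : ZMod 2) = x := by
  revert x; decide

theorem omegaForm_comm (A B : Finset Q) : omegaForm A B = omegaForm B A := by
  rw [omegaForm, omegaForm, Finset.inter_comm]

theorem omegaForm_add_left (A B C : Finset Q) :
    omegaForm (A + B) C = omegaForm A C + omegaForm B C := by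
  rw [omegaForm, omegaForm, omegaForm, ← Finset.natCast_card_symmDiff]
  exact congrArg (Nat.cast ∘ Finset.card) (inf_symmDiff_distrib_right A B C)

theorem omegaForm_smul_left (c : ZMod 2) (A B : Finset Q) :
    omegaForm (c • A) B = c * omegaForm A B :=
  ZMod.map_smul (AddMonoidHom.mk' (omegaForm · B) (omegaForm_add_left · · B)) c A

theorem omegaForm_add_right (A B C : Finset Q) :
    omegaForm A (B + C) = omegaForm A B + omegaForm A C := by
  simp only [omegaForm_comm A, omegaForm_add_left]

theorem omegaForm_zero_left (A : Finset Q) : omegaForm 0 A = 0 :=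
  (AddMonoidHom.mk' (omegaForm · A) (omegaForm_add_left · · A)).map_zero

theorem omegaForm_singleton_right (A : Finset Q) (q : Q) :
    omegaForm A {q} = if q ∈ A then 1 else 0 := by
  unfold omegaForm
  split_ifs with hq
  · rw [Finset.inter_singleton_of_mem hq, Finset.card_singleton, Nat.cast_one]
  · rw [Finset.inter_singleton_of_notMem hq, Finset.card_empty, Nat.cast_zero]

theorem eq_zero_of_forall_omegaForm_eq_zero {A : Finset Q} (h : ∀ B, omegaForm A B = 0) :
    A = 0 :=
  Finset.eq_empty_of_forall_notMem fun q hq => by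
    simpa [omegaForm_singleton_right, hq] using h {q}

def omegaBilin : LinearMap.BilinForm (ZMod 2) (Finset Q) :=
  LinearMap.mk₂ (ZMod 2) omegaForm omegaForm_add_left omegaForm_smul_left
    omegaForm_add_right
    (fun c A B => by simp only [omegaForm_comm A, omegaForm_smul_left, smul_eq_mul])

theorem omegaBilin_apply (A B : Finset Q) : omegaBilin A B = omegaForm A B := rfl

theorem omegaBilin_isSymm : (omegaBilin (Q := Q)).IsSymm :=
  ⟨omegaForm_comm⟩

theorem omegaBilin_nondegenerate : (omegaBilin (Q := Q)).Nondegenerate :=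
  omegaBilin_isSymm.isRefl.nondegenerate_iff_separatingLeft.2 fun _ =>
    eq_zero_of_forall_omegaForm_eq_zero

theorem lamForm_eq_omegaForm (F G : Finset Q × Finset Q) :
    lamForm F G = omegaForm F.1 G.2 + omegaForm G.1 F.2 := rfl

theorem lamForm_add_left (F G H : Finset Q × Finset Q) :
    lamForm (F + G) H = lamForm F H + lamForm G H := by
  simp only [lamForm_eq_omegaForm, Prod.fst_add, Prod.snd_add, omegaForm_add_left,
    omegaForm_add_right]
  ring

theorem lamForm_add_right (F G H : Finset Q × Finset Q) :
    lamForm F (G + H) = lamForm F G + lamForm F H := by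
  simp only [lamForm_eq_omegaForm, Prod.fst_add, Prod.snd_add, omegaForm_add_left,
    omegaForm_add_right]
  ring

theorem lamForm_zero_left (G : Finset Q × Finset Q) : lamForm 0 G = 0 :=
  (AddMonoidHom.mk' (lamForm · G) (lamForm_add_left · · G)).map_zero

theorem lamForm_sum_left {κ : Type*} (t : Finset κ) (F : κ → Finset Q × Finset Q)
    (G : Finset Q × Finset Q) : lamForm (∑ i ∈ t, F i) G = ∑ i ∈ t, lamForm (F i) G :=
  map_sum (AddMonoidHom.mk' (lamForm · G) (lamForm_add_left · · G)) F t

theorem eq_zero_of_forall_lamForm_eq_zero {F : Finset Q × Finset Q}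
    (h : ∀ G, lamForm F G = 0) : F = 0 :=
  Prod.ext
    (eq_zero_of_forall_omegaForm_eq_zero fun B => by
      simpa [lamForm_eq_omegaForm, omegaForm_zero_left] using h (0, B))
    (eq_zero_of_forall_omegaForm_eq_zero fun B => by
      rw [omegaForm_comm]
      simpa [lamForm_eq_omegaForm, omegaForm_comm F.1, omegaForm_zero_left] using h (B, 0))

theorem psiMap_add (s : ι → Finset Q × Finset Q) (f g : Finset Q × Finset Q) :
    psiMap s (f + g) = psiMap s f + psiMap s g := by
  ext i
  change _ ↔ i ∈ psiMap s f ∆ psiMap s g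
  simp only [psiMap, Finset.mem_symmDiff, Finset.mem_filter, Finset.mem_univ, true_and,
    lamForm_add_right]
  generalize lamForm (s i) f = a
  generalize lamForm (s i) g = b
  revert a b
  decide

def psiLinearMap (s : ι → Finset Q × Finset Q) : (Finset Q × Finset Q) →ₗ[ZMod 2] Finset ι :=
  (AddMonoidHom.mk' (psiMap s) (psiMap_add s)).toZModLinearMap 2

theorem omegaForm_psiMap (s : ι → Finset Q × Finset Q) (C : Finset ι) (f : Finset Q × Finset Q) :
    omegaForm C (psiMap s f) = lamForm (phiMap s C) f := by
  rw [phiMap, lamForm_sum_left, omegaForm, psiMap, Finset.inter_filter, Finset.inter_univ,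
    Finset.natCast_card_filter]
  exact Finset.sum_congr rfl fun i _ => ZMod.ite_eq_one _

theorem mem_orthogonal_range_psiLinearMap {s : ι → Finset Q × Finset Q} {C : Finset ι} :
    C ∈ omegaBilin.orthogonal (LinearMap.range (psiLinearMap s)) ↔ phiMap s C = 0 := by
  simp only [LinearMap.BilinForm.mem_orthogonal_iff, LinearMap.mem_range, forall_exists_index,
    forall_apply_eq_imp_iff, omegaBilin_apply, omegaForm_comm _ C]
  change (∀ f, omegaForm C (psiMap s f) = 0) ↔ _
  simp only [omegaForm_psiMap]
  exact ⟨eq_zero_of_forall_lamForm_eq_zero, fun hC f => hC ▸ lamForm_zero_left f⟩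

theorem stabilizer_brules_rules_general {Q ι : Type*} [DecidableEq Q] [Fintype ι] [DecidableEq ι]
    (s : ι → Finset Q × Finset Q) (J : Finset ι) :
    (∃ f : Finset Q × Finset Q, psiMap s f = J) ↔
      ∀ C : Finset ι, phiMap s C = 0 → omegaForm C J = 0 :=
  calc (∃ f, psiMap s f = J) ↔ J ∈ LinearMap.range (psiLinearMap s) := Iff.rfl
    _ ↔ J ∈ omegaBilin.orthogonal (omegaBilin.orthogonal (LinearMap.range (psiLinearMap s))) := by
      rw [LinearMap.BilinForm.orthogonal_orthogonal omegaBilin_nondegenerate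
        omegaBilin_isSymm.isRefl]
    _ ↔ ∀ C : Finset ι, phiMap s C = 0 → omegaForm C J = 0 := by
      rw [LinearMap.BilinForm.mem_orthogonal_iff]
      simp only [mem_orthogonal_range_psiLinearMap, omegaBilin_apply]

/-- (Stabilizer Brule's Rules) `J ⊆ S` is a syndrome, i.e. `J ∈ im ψ`, if and
only if `ω(C, J) = 0` for every constraint `C ∈ ker φ`. -/
theorem stabilizer_brules_rules {Q ι : Type*} [DecidableEq Q] [Fintype ι] [DecidableEq ι]
    (s : ι → Finset Q × Finset Q) (hinj : Function.Injective s)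
    (hcomm : ∀ i j : ι, lamForm (s i) (s j) = 0) (J : Finset ι) :
    (∃ f : Finset Q × Finset Q, psiMap s f = J) ↔
      ∀ C : Finset ι, phiMap s C = 0 → omegaForm C J = 0 :=
  stabilizer_brules_rules_general s J
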